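/- The inverse ψ of the homogeneous normalization map is a reverse-Pentagon map: for all x, y, z in D × D such that every element whose inverse is taken in the evaluation of either side at (x,y,z) is nonzero, ψ₂₃(ψ₁₃(ψ₁₂(x,y,z))) = ψ₁₂(ψ₂₃(x,y,z)). -/

import Mathlib

/-!
Reading `(a₁, a₂)` as the affine map `t ↦ a₁ t + a₂` (`upperMul`) or as `t ↦ a₂ t + a₁`
(`lowerMul`), composition gives two associative products `⋆` and `·` on `D × D`, and
`ψ(u, v) = (u · v, v ⋆ (u · v)⁻¹)`. The two sides of the pentagon then agree componentwise by
associativity of `·`, by the mixed law `(y ⋆ g⁻¹) · (z ⋆ (g · z)⁻¹) = (y · z) ⋆ (g · z)⁻¹`, and by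
the group laws of `⋆`.
-/

/-- The map acting as `S` on the first and second factors of `X × X × X`. -/
def map12 {X : Type*} (S : X × X → X × X) : X × X × X → X × X × X :=
  fun p => ((S (p.1, p.2.1)).1, (S (p.1, p.2.1)).2, p.2.2)

/-- The map acting as `S` on the first and third factors of `X × X × X`. -/
def map13 {X : Type*} (S : X × X → X × X) : X × X × X → X × X × X :=
  fun p => ((S (p.1, p.2.2)).1, p.2.1, (S (p.1, p.2.2)).2)

/-- The map acting as `S` on the second and third factors of `X × X × X`. -/
def map23 {X : Type*} (S : X × X → X × X) : X × X × X → X × X × X :=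
  fun p => (p.1, (S (p.2.1, p.2.2)).1, (S (p.2.1, p.2.2)).2)

variable {D : Type*} [DivisionRing D]

/-- The inverse `ψ` of the homogeneous normalization map. -/
def normMapInv : (D × D) × (D × D) → (D × D) × (D × D) :=
  fun ⟨⟨u1, u2⟩, ⟨v1, v2⟩⟩ =>
    ((u1 + u2 * v1, u2 * v2),
     (v1 * (u1 + u2 * v1)⁻¹, v2 - v1 * (u1 + u2 * v1)⁻¹ * (u2 * v2)))

/-- The (unique) element whose inverse is taken when evaluating `ψ` at `(a, b)`. -/
def invArg (a b : D × D) : D := a.1 + a.2 * b.1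

def lowerMul (u v : D × D) : D × D := (u.1 + u.2 * v.1, u.2 * v.2)

def upperMul (y x : D × D) : D × D := (y.1 * x.1, y.2 + y.1 * x.2)

def upperInv (x : D × D) : D × D := (x.1⁻¹, -(x.1⁻¹ * x.2))

theorem lowerMul_assoc (u v w : D × D) :
    lowerMul (lowerMul u v) w = lowerMul u (lowerMul v w) := by
  simp only [lowerMul, Prod.mk.injEq]
  constructor <;> noncomm_ring

theorem upperMul_assoc (a b c : D × D) :
    upperMul (upperMul a b) c = upperMul a (upperMul b c) := by
  simp only [upperMul, Prod.mk.injEq]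
  constructor <;> noncomm_ring

theorem upperMul_one_left (x : D × D) : upperMul (1, 0) x = x := by
  simp [upperMul]

theorem upperMul_upperInv_self {x : D × D} (hx : x.1 ≠ 0) : upperMul (upperInv x) x = (1, 0) := by
  simp [upperMul, upperInv, inv_mul_cancel₀ hx]

theorem upperInv_upperInv {x : D × D} (hx : x.1 ≠ 0) : upperInv (upperInv x) = x := by
  simp [upperInv, mul_inv_cancel_left₀ hx]

theorem upperInv_upperMul {y : D × D} (hy : y.1 ≠ 0) (x : D × D) :
    upperInv (upperMul y x) = upperMul (upperInv x) (upperInv y) := by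
  simp only [upperMul, upperInv, mul_inv_rev, Prod.mk.injEq, true_and]
  rw [mul_add, mul_assoc x.1⁻¹ y.1⁻¹ (y.1 * x.2), inv_mul_cancel_left₀ hy]
  noncomm_ring

theorem normMapInv_apply (u v : D × D) :
    normMapInv (u, v) = (lowerMul u v, upperMul v (upperInv (lowerMul u v))) := by
  simp only [normMapInv, lowerMul, upperMul, upperInv, Prod.mk.injEq, true_and]
  noncomm_ring

theorem lowerMul_upperMul_upperInv (y z : D × D) {g : D × D} (hg : g.1 ≠ 0)
    (hgz : (lowerMul g z).1 ≠ 0) :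
    lowerMul (upperMul y (upperInv g)) (upperMul z (upperInv (lowerMul g z))) =
      upperMul (lowerMul y z) (upperInv (lowerMul g z)) := by
  have hinv : g.1⁻¹ - g.1⁻¹ * (g.2 * z.1) * (lowerMul g z).1⁻¹ = (lowerMul g z).1⁻¹ := by
    rw [sub_eq_iff_eq_add', ← sub_eq_iff_eq_add, inv_sub_inv' hg hgz, lowerMul,
      add_sub_cancel_left]
  simp only [lowerMul, upperMul, upperInv, Prod.mk.injEq] at hinv ⊢
  set b := (g.1 + g.2 * z.1)⁻¹
  constructor
  · calc y.1 * g.1⁻¹ + (y.2 + y.1 * -(g.1⁻¹ * g.2)) * (z.1 * b)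
        = y.1 * (g.1⁻¹ - g.1⁻¹ * (g.2 * z.1) * b) + y.2 * z.1 * b := by noncomm_ring
      _ = (y.1 + y.2 * z.1) * b := by rw [hinv]; noncomm_ring
  · calc (y.2 + y.1 * -(g.1⁻¹ * g.2)) * (z.2 + z.1 * -(b * (g.2 * z.2)))
        = y.2 * z.2 - y.2 * z.1 * b * (g.2 * z.2)
            - y.1 * (g.1⁻¹ - g.1⁻¹ * (g.2 * z.1) * b) * (g.2 * z.2) := by noncomm_ring
      _ = y.2 * z.2 + (y.1 + y.2 * z.1) * -(b * (g.2 * z.2)) := by rw [hinv]; noncomm_ring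

theorem normMapInv_reversePentagon_general (x y z : D × D)
    (h1 : invArg x y ≠ 0)
    (h2 : invArg (map12 normMapInv (x, y, z)).1 (map12 normMapInv (x, y, z)).2.2 ≠ 0)
    (h4 : invArg y z ≠ 0) :
    map23 normMapInv (map13 normMapInv (map12 normMapInv (x, y, z))) =
      map12 normMapInv (map23 normMapInv (x, y, z)) := by
  have hxy : (lowerMul x y).1 ≠ 0 := h1
  have hxyz : (lowerMul (lowerMul x y) z).1 ≠ 0 := h2
  have hyz : (lowerMul y z).1 ≠ 0 := h4
  simp only [map12, map13, map23, normMapInv_apply]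
  rw [lowerMul_upperMul_upperInv y z hxy hxyz, upperInv_upperMul hyz, upperInv_upperInv hxyz,
    upperMul_assoc, ← upperMul_assoc (upperInv _), upperMul_upperInv_self hxyz, upperMul_one_left,
    lowerMul_assoc]

/-- The inverse `ψ` of the homogeneous normalization map is a reverse-Pentagon map:
`ψ₂₃ ∘ ψ₁₃ ∘ ψ₁₂ = ψ₁₂ ∘ ψ₂₃`, wherever all the inverses taken on either side are
inverses of nonzero elements. -/
theorem normMapInv_reversePentagon (x y z : D × D)
    (h1 : invArg x y ≠ 0)
    (h2 : invArg (map12 normMapInv (x, y, z)).1 (map12 normMapInv (x, y, z)).2.2 ≠ 0)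
    (h3 : invArg (map13 normMapInv (map12 normMapInv (x, y, z))).2.1
            (map13 normMapInv (map12 normMapInv (x, y, z))).2.2 ≠ 0)
    (h4 : invArg y z ≠ 0)
    (h5 : invArg (map23 normMapInv (x, y, z)).1 (map23 normMapInv (x, y, z)).2.1 ≠ 0) :
    map23 normMapInv (map13 normMapInv (map12 normMapInv (x, y, z))) =
      map12 normMapInv (map23 normMapInv (x, y, z)) :=
  normMapInv_reversePentagon_general x y z h1 h2 h4
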